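/- arXiv:2402.06333 — 3 statements merged into one kernel-verified Lean document; each statement's English description precedes it below -/
import Mathlib

section
/- The inclusion relation ⊑ on embedded coalitions, defined by (S;P) ⊑ (T;Q) iff S ⊆ T and every block T' of Q other than T is contained in some block of P, is a partial order on the set of embedded coalitions of a finite set N. -/
open scoped Classical

/-- A partition of the finite set `α` (the empty set is allowed/required as a block). -/
def IsPartition {α : Type*} [Fintype α] [DecidableEq α] (P : Finset (Finset α)) : Prop :=
  (∅ : Finset α) ∈ P ∧
  (∀ S ∈ P, ∀ T ∈ P, S ≠ T → Disjoint S T) ∧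
  P.sup id = Finset.univ

/-- An embedded coalition: a partition `P` together with an active block `S ∈ P`. -/
structure EC (α : Type*) [Fintype α] [DecidableEq α] where
  P : Finset (Finset α)
  S : Finset α
  memP : S ∈ P
  part : IsPartition P

/-- Inclusion of embedded coalitions: `(S;P) ⊑ (T;Q)` iff `S ⊆ T` and every block of
`Q` other than `T` is contained in some block of `P`. -/
def ECle {α : Type*} [Fintype α] [DecidableEq α] (a b : EC α) : Prop :=
  a.S ⊆ b.S ∧ ∀ T' ∈ b.P.erase b.S, ∃ S' ∈ a.P, T' ⊆ S'

lemma antisym_aux {α : Type*} [Fintype α] [DecidableEq α] (a b : EC α)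
    (hab : ECle a b) (hba : ECle b a) (hS : a.S = b.S) : b.P ⊆ a.P := by
  intro T' hT'
  by_cases hTS : T' = b.S
  · subst hTS; rw [← hS]; exact a.memP
  · obtain ⟨S', hS'P, hTS'⟩ := hab.2 T' (Finset.mem_erase.mpr ⟨hTS, hT'⟩)
    by_cases hS'S : S' = a.S
    · -- T' ⊆ a.S = b.S, but T' ≠ b.S, both in b.P, disjoint ⇒ T' = ∅
      have hdisj : Disjoint T' b.S := b.part.2.1 T' hT' b.S b.memP hTS
      have : T' = (∅ : Finset α) := by
        apply Finset.eq_empty_of_forall_notMem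
        intro x hx
        exact (hdisj.forall_ne_finset hx (hS ▸ hS'S ▸ hTS' hx)) rfl
      rw [this]; exact a.part.1
    · obtain ⟨T'', hT''Q, hS'T''⟩ := hba.2 S' (Finset.mem_erase.mpr ⟨hS'S, hS'P⟩)
      by_cases hTT'' : T' = T''
      · have : T' = S' := Finset.Subset.antisymm hTS' (hTT'' ▸ hS'T'')
        rw [this]; exact hS'P
      · have hdisj : Disjoint T' T'' := b.part.2.1 T' hT' T'' hT''Q hTT''
        have : T' = (∅ : Finset α) := by
          apply Finset.eq_empty_of_forall_notMem
          intro x hx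
          exact (hdisj.forall_ne_finset hx (hS'T'' (hTS' hx))) rfl
        rw [this]; exact a.part.1

/-- The inclusion relation on embedded coalitions is a partial order. -/
theorem ECle_isPartialOrder (α : Type*) [Fintype α] [DecidableEq α] :
    IsPartialOrder (EC α) ECle := by
  refine { refl := ?_, trans := ?_, antisymm := ?_ }
  · intro a
    exact ⟨le_refl _, fun T' hT' => ⟨T', Finset.mem_of_mem_erase hT', le_refl _⟩⟩
  · intro a b c hab hbc
    refine ⟨hab.1.trans hbc.1, ?_⟩
    intro T' hT'
    obtain ⟨U, hU, hTU⟩ := hbc.2 T' hT'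
    by_cases hUb : U = b.S
    · have hsub : T' ⊆ c.S := (hUb ▸ hTU).trans hbc.1
      have hdisj : Disjoint T' c.S :=
        c.part.2.1 T' (Finset.mem_of_mem_erase hT') c.S c.memP
          (Finset.ne_of_mem_erase hT')
      have hempty : T' = (∅ : Finset α) := by
        apply Finset.eq_empty_of_forall_notMem
        intro x hx
        exact (hdisj.forall_ne_finset hx (hsub hx)) rfl
      exact ⟨∅, a.part.1, by simp [hempty]⟩
    · obtain ⟨S', hS', hUS'⟩ := hab.2 U (Finset.mem_erase.mpr ⟨hUb, hU⟩)
      exact ⟨S', hS', hTU.trans hUS'⟩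
  · intro a b hab hba
    have hS : a.S = b.S := Finset.Subset.antisymm hab.1 hba.1
    have hP : a.P = b.P :=
      Finset.Subset.antisymm (antisym_aux b a hba hab hS.symm) (antisym_aux a b hab hba hS)
    cases a; cases b
    simp_all
end

section
/- If (N,v) and (N,v') are mergeable simple games in characteristic function form, then the set of minimal winning coalitions of their union satisfies M(v ∨ v') = M(v) ∪ M(v'), and M(v) ∩ M(v') = ∅. -/
open scoped Classical

variable {α : Type*} [Fintype α] [DecidableEq α]

/-- A simple game in characteristic function form: `{0,1}`-valued, `v ∅ = 0`,
the grand coalition wins, and monotone. -/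
def IsSimpleGame (v : Finset α → ℝ) : Prop :=
  (∀ S, v S = 0 ∨ v S = 1) ∧ v ∅ = 0 ∧ v Finset.univ = 1 ∧
    ∀ S T : Finset α, S ⊆ T → v S ≤ v T

/-- The set of minimal winning coalitions. -/
noncomputable def MW (v : Finset α → ℝ) : Finset (Finset α) :=
  Finset.univ.filter (fun S => v S = 1 ∧ ∀ T : Finset α, T ⊂ S → v T = 0)

/-- The minimal winning coalitions containing player `i`. -/
noncomputable def MWi (v : Finset α → ℝ) (i : α) : Finset (Finset α) :=
  (MW v).filter (fun S => i ∈ S)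

/-- The Deegan–Packel power index. -/
noncomputable def DP (v : Finset α → ℝ) (i : α) : ℝ :=
  (1 / ((MW v).card : ℝ)) * ∑ S ∈ MWi v i, (1 / (S.card : ℝ))

/-- The Public Good power index. -/
noncomputable def PG (v : Finset α → ℝ) (i : α) : ℝ :=
  ((MWi v i).card : ℝ) / ∑ j : α, ((MWi v j).card : ℝ)

/-- Mergeability of two simple games. -/
def Mergeable (v v' : Finset α → ℝ) : Prop :=
  ∀ S ∈ MW v, ∀ T ∈ MW v', ¬ S ⊆ T ∧ ¬ T ⊆ S

/-- The weighted majority game with quota `q` and weights `w`. -/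
noncomputable def wmg (q : ℝ) (w : α → ℝ) : Finset α → ℝ :=
  fun S => if q ≤ ∑ i ∈ S, w i then 1 else 0

/-- The Colomer-Martínez power index. -/
noncomputable def CM (q : ℝ) (w : α → ℝ) (i : α) : ℝ :=
  (1 / ((MW (wmg q w)).card : ℝ)) * ∑ S ∈ MWi (wmg q w) i, (w i / ∑ j ∈ S, w j)

/-- The Holler-Colomer-Martínez power index. -/
noncomputable def HCM (q : ℝ) (w : α → ℝ) (i : α) : ℝ :=
  (((MWi (wmg q w) i).card : ℝ) * w i) / ∑ j : α, ((MWi (wmg q w) j).card : ℝ) * w j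

lemma exists_mw_subset (v : Finset α → ℝ) (hv : IsSimpleGame v) :
    ∀ T : Finset α, v T = 1 → ∃ T' ∈ MW v, T' ⊆ T := by
  intro T
  induction T using Finset.strongInduction with
  | _ T ih =>
    intro hT
    by_cases h : ∀ U : Finset α, U ⊂ T → v U = 0
    · exact ⟨T, by simp [MW, hT]; exact h, subset_rfl⟩
    · push_neg at h
      obtain ⟨U, hU, hU0⟩ := h
      have hU1 : v U = 1 := (hv.1 U).resolve_left hU0
      obtain ⟨T', hT', hsub⟩ := ih U hU hU1
      exact ⟨T', hT', hsub.trans hU.subset⟩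

/-- For mergeable simple games, the minimal winning coalitions of the union game are
the union of the respective sets of minimal winning coalitions, which are disjoint. -/
theorem MW_union_of_mergeable (v v' : Finset α → ℝ)
    (hv : IsSimpleGame v) (hv' : IsSimpleGame v') (hm : Mergeable v v') :
    MW (fun S => max (v S) (v' S)) = MW v ∪ MW v' ∧ MW v ∩ MW v' = ∅ := by
  constructor
  · ext S
    simp only [MW, Finset.mem_filter, Finset.mem_univ, true_and, Finset.mem_union]
    constructor
    · rintro ⟨h1, hmin⟩
      have h01 : v S = 1 ∨ v' S = 1 := by
        by_contra hc
        push_neg at hc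
        have e1 : v S = 0 := (hv.1 S).resolve_right hc.1
        have e2 : v' S = 0 := (hv'.1 S).resolve_right hc.2
        rw [e1, e2] at h1
        norm_num at h1
      rcases h01 with h | h
      · left
        refine ⟨h, fun T hT => ?_⟩
        have hmt := hmin T hT
        rcases hv.1 T with h0 | h0
        · exact h0
        · exfalso
          rw [h0] at hmt
          have hle := le_max_left (1:ℝ) (v' T)
          linarith [hle.trans_eq hmt]
      · right
        refine ⟨h, fun T hT => ?_⟩
        have hmt := hmin T hT
        rcases hv'.1 T with h0 | h0
        · exact h0
        · exfalso
          rw [h0] at hmt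
          have hle := le_max_right (v T) (1:ℝ)
          linarith [hle.trans_eq hmt]
    · rintro (⟨h1, hmin⟩ | ⟨h1, hmin⟩)
      · refine ⟨by rcases hv'.1 S with h|h <;> simp [h, h1], fun T hT => ?_⟩
        have hvT := hmin T hT
        have hv'T : v' T = 0 := by
          by_contra h0
          have h1' : v' T = 1 := (hv'.1 T).resolve_left h0
          obtain ⟨T', hT', hsub⟩ := exists_mw_subset v' hv' T h1'
          have hS : S ∈ MW v := by simp [MW, h1]; exact hmin
          exact (hm S hS T' hT').2 (hsub.trans hT.subset)
        simp [hvT, hv'T]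
      · refine ⟨by rcases hv.1 S with h|h <;> simp [h, h1], fun T hT => ?_⟩
        have hv'T := hmin T hT
        have hvT : v T = 0 := by
          by_contra h0
          have h1' : v T = 1 := (hv.1 T).resolve_left h0
          obtain ⟨T', hT', hsub⟩ := exists_mw_subset v hv T h1'
          have hS : S ∈ MW v' := by simp [MW, h1]; exact hmin
          exact (hm T' hT' S hS).1 (hsub.trans hT.subset)
        simp [hvT, hv'T]
  · ext S
    simp only [Finset.mem_inter, Finset.notMem_empty, iff_false, not_and]
    intro h1 h2
    exact absurd subset_rfl (hm S h1 S h2).1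
end

section
/- For any pair of mergeable simple games (N,v) and (N,v'), the Deegan-Packel power index satisfies the merging formula: DP_i(N, v ∨ v') = (|M(v)|·DP_i(N,v) + |M(v')|·DP_i(N,v')) / |M(v ∨ v')| for every player i. -/
open scoped Classical

variable {α : Type*} [Fintype α] [DecidableEq α]

lemma exists_MW_subset (v : Finset α → ℝ) (hv : IsSimpleGame v) :
    ∀ S : Finset α, v S = 1 → ∃ T ∈ MW v, T ⊆ S := by
  intro S
  induction S using Finset.strongInduction with
  | _ S ih =>
    intro hS
    by_cases h : ∀ T ⊂ S, v T = 0
    · refine ⟨S, ?_, subset_rfl⟩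
      simp only [MW, Finset.mem_filter, Finset.mem_univ, true_and]
      exact ⟨hS, h⟩
    · push_neg at h
      obtain ⟨T, hTS, hT⟩ := h
      have hT1 : v T = 1 := (hv.1 T).resolve_left hT
      obtain ⟨U, hU, hUT⟩ := ih T hTS hT1
      exact ⟨U, hU, hUT.trans hTS.subset⟩

lemma MW_max_eq (v v' : Finset α → ℝ) (hv : IsSimpleGame v) (hv' : IsSimpleGame v')
    (hm : Mergeable v v') :
    MW (fun S => max (v S) (v' S)) = MW v ∪ MW v' := by
  ext S
  simp only [MW, Finset.mem_union, Finset.mem_filter, Finset.mem_univ, true_and]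
  constructor
  · rintro ⟨h1, hmin⟩
    have hzero : ∀ T ⊂ S, v T = 0 ∧ v' T = 0 := by
      intro T hT
      have h0 : max (v T) (v' T) = 0 := hmin T hT
      have l1 : v T ≤ 0 := h0 ▸ le_max_left (v T) (v' T)
      have l2 : v' T ≤ 0 := h0 ▸ le_max_right (v T) (v' T)
      constructor
      · rcases hv.1 T with h | h; · exact h
        · rw [h] at l1; linarith
      · rcases hv'.1 T with h | h; · exact h
        · rw [h] at l2; linarith
    rcases hv.1 S with hS | hS
    · right
      rw [hS] at h1
      rcases hv'.1 S with hS' | hS'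
      · rw [hS'] at h1; norm_num at h1
      · exact ⟨hS', fun T hT => (hzero T hT).2⟩
    · exact Or.inl ⟨hS, fun T hT => (hzero T hT).1⟩
  · intro h
    rcases h with ⟨h1, hmin⟩ | ⟨h1, hmin⟩
    · have hSmw : S ∈ MW v := by
        simp only [MW, Finset.mem_filter, Finset.mem_univ, true_and]
        exact ⟨h1, hmin⟩
      refine ⟨by rw [h1]; rcases hv'.1 S with h | h <;> rw [h] <;> norm_num, ?_⟩
      intro T hT
      have hvT := hmin T hT
      have hv'T : v' T = 0 := by
        by_contra hne
        have h2 : v' T = 1 := (hv'.1 T).resolve_left hne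
        obtain ⟨U, hU, hUT⟩ := exists_MW_subset v' hv' T h2
        exact (hm S hSmw U hU).2 (hUT.trans hT.subset)
      rw [hvT, hv'T]; norm_num
    · have hSmw : S ∈ MW v' := by
        simp only [MW, Finset.mem_filter, Finset.mem_univ, true_and]
        exact ⟨h1, hmin⟩
      refine ⟨by rw [h1]; rcases hv.1 S with h | h <;> rw [h] <;> norm_num, ?_⟩
      intro T hT
      have hv'T := hmin T hT
      have hvT : v T = 0 := by
        by_contra hne
        have h2 : v T = 1 := (hv.1 T).resolve_left hne
        obtain ⟨U, hU, hUT⟩ := exists_MW_subset v hv T h2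
        exact (hm U hU S hSmw).1 (hUT.trans hT.subset)
      rw [hvT, hv'T]; norm_num

lemma MW_disjoint (v v' : Finset α → ℝ) (hm : Mergeable v v') :
    Disjoint (MW v) (MW v') := by
  rw [Finset.disjoint_left]
  intro S hS hS'
  exact (hm S hS S hS').1 subset_rfl

lemma MW_nonempty (v : Finset α → ℝ) (hv : IsSimpleGame v) : (MW v).Nonempty := by
  obtain ⟨T, hT, _⟩ := exists_MW_subset v hv Finset.univ hv.2.2.1
  exact ⟨T, hT⟩

/-- The Deegan–Packel merging formula for mergeable simple games. -/
theorem DP_mergeable (v v' : Finset α → ℝ)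
    (hv : IsSimpleGame v) (hv' : IsSimpleGame v') (hm : Mergeable v v') (i : α) :
    DP (fun S => max (v S) (v' S)) i =
      (((MW v).card : ℝ) * DP v i + ((MW v').card : ℝ) * DP v' i) /
        ((MW (fun S => max (v S) (v' S))).card : ℝ) := by
  have hMW := MW_max_eq v v' hv hv' hm
  have hd := MW_disjoint v v' hm
  have ha : ((MW v).card : ℝ) ≠ 0 := by
    exact_mod_cast Finset.card_ne_zero_of_mem (MW_nonempty v hv).choose_spec
  have hb : ((MW v').card : ℝ) ≠ 0 := by
    exact_mod_cast Finset.card_ne_zero_of_mem (MW_nonempty v' hv').choose_spec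
  have hMWi : MWi (fun S => max (v S) (v' S)) i = MWi v i ∪ MWi v' i := by
    rw [MWi, hMW, Finset.filter_union]; rfl
  have hdi : Disjoint (MWi v i) (MWi v' i) :=
    hd.mono (Finset.filter_subset _ _) (Finset.filter_subset _ _)
  rw [DP, hMWi, hMW, Finset.sum_union hdi, Finset.card_union_of_disjoint hd]
  rw [DP, DP]
  push_cast
  field_simp
  try ring
end
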